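/- For a finite set S ⊆ F_2^n with |S| = m, the number F_{2,3} of 2-dimensional affine subspaces of F_2^n containing exactly 3 points of S satisfies F_{2,3} = (m³ − E(S))/6. -/

import Mathlib

def IsFlat (n k : ℕ) (H : Set (Fin n → ZMod 2)) : Prop :=
  ∃ (x : Fin n → ZMod 2) (W : Submodule (ZMod 2) (Fin n → ZMod 2)),
    Module.finrank (ZMod 2) W = k ∧ H = (fun w => x + w) '' (W : Set (Fin n → ZMod 2))

noncomputable def energy (n : ℕ) (S : Set (Fin n → ZMod 2)) : ℕ :=
  {u : (Fin n → ZMod 2) × (Fin n → ZMod 2) × (Fin n → ZMod 2) × (Fin n → ZMod 2) |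
    u.1 ∈ S ∧ u.2.1 ∈ S ∧ u.2.2.1 ∈ S ∧ u.2.2.2 ∈ S ∧
    u.1 + u.2.1 = u.2.2.1 + u.2.2.2}.ncard

/-!
Over `𝔽₂` three distinct points `a, b, c` lie in exactly one 2-flat, namely `{a, b, c, a + b + c}`.
Energy quadruples correspond to the triples `(a, b, c) ∈ S³` with `a + b + c ∈ S`, so the remaining
`m³ - E(S)` triples are those with `a + b + c ∉ S`. Their entries are distinct, and
`(a, b, c) ↦ {a, b, c, a + b + c}` maps them onto the flats meeting `S` in exactly three points,
the fibre over `H` being the `3! = 6` orderings of `H ∩ S`.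
-/

open Set

namespace ZModModule

variable {G : Type*} [AddCommGroup G] [Module (ZMod 2) G] {a b c : G}

lemma add_add_eq_left_iff : a + b + c = a ↔ b = c := by
  rw [add_assoc, add_eq_left, ← sub_eq_add, sub_eq_zero]

lemma add_add_eq_middle_iff : a + b + c = b ↔ a = c := by
  rw [add_comm a b, add_add_eq_left_iff]

lemma add_add_eq_right_iff : a + b + c = c ↔ a = b := by
  rw [add_eq_right, ← sub_eq_add, sub_eq_zero]

lemma pairwise_ne_of_add_add_notMem {S : Set G} (ha : a ∈ S) (hb : b ∈ S) (hc : c ∈ S)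
    (h : a + b + c ∉ S) : a ≠ b ∧ a ≠ c ∧ b ≠ c :=
  ⟨fun hab => h (add_add_eq_right_iff.mpr hab ▸ hc),
    fun hac => h (add_add_eq_middle_iff.mpr hac ▸ hb),
    fun hbc => h (add_add_eq_left_iff.mpr hbc ▸ ha)⟩

lemma ncard_insert_add_add (hab : a ≠ b) (hac : a ≠ c) (hbc : b ≠ c) :
    ({a, b, c, a + b + c} : Set G).ncard = 4 := by
  have hd : a + b + c ≠ a ∧ a + b + c ≠ b ∧ a + b + c ≠ c :=
    ⟨add_add_eq_left_iff.not.mpr hbc, add_add_eq_middle_iff.not.mpr hac,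
      add_add_eq_right_iff.not.mpr hab⟩
  rw [ncard_insert_of_notMem (by simp [hab, hac, hd.1.symm]),
    ncard_insert_of_notMem (by simp [hbc, hd.2.1.symm]), ncard_pair hd.2.2.symm]

lemma add_eq_add_iff_add_add_eq {d : G} : a + b = c + d ↔ a + b + c = d := by
  rw [← eq_sub_iff_add_eq (b := d), sub_eq_add, add_comm d]

lemma coe_span_pair (u v : G) :
    (Submodule.span (ZMod 2) {u, v} : Set G) = {0, u, v, u + v} := by
  have h2 : ∀ s : ZMod 2, s = 0 ∨ s = 1 := by decide
  ext w
  rw [SetLike.mem_coe, Submodule.mem_span_pair]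
  constructor
  · rintro ⟨s, t, rfl⟩
    rcases h2 s with rfl | rfl <;> rcases h2 t with rfl | rfl <;> simp
  · rintro (rfl | rfl | rfl | rfl)
    exacts [⟨0, 0, by simp⟩, ⟨1, 0, by simp⟩, ⟨0, 1, by simp⟩, ⟨1, 1, by simp⟩]

lemma ncard_image_add_submodule [Finite G] (x : G) (W : Submodule (ZMod 2) G) :
    ((fun w => x + w) '' (W : Set G)).ncard = 2 ^ Module.finrank (ZMod 2) W := by
  rw [ncard_image_of_injective _ (add_right_injective x), ← Nat.card_coe_set_eq,
    SetLike.coe_sort_coe, Module.natCard_eq_pow_finrank (K := ZMod 2), Nat.card_zmod]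

end ZModModule

open ZModModule

lemma Set.ncard_eq_ncard_mul_of_fibers {α β : Type*} {s : Set α} {t : Set β} (hs : s.Finite)
    (ht : t.Finite) {f : α → β} (hf : MapsTo f s t) {k : ℕ}
    (hk : ∀ b ∈ t, {a ∈ s | f a = b}.ncard = k) : s.ncard = t.ncard * k := by
  classical
  rw [ncard_eq_toFinset_card s hs, ncard_eq_toFinset_card t ht,
    Finset.card_eq_sum_card_fiberwise (f := f) (t := ht.toFinset) (by simpa using hf),
    Finset.sum_congr rfl (g := fun _ => k), Finset.sum_const, smul_eq_mul]
  intro b hb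
  rw [← hk b (by simpa using hb), ← ncard_coe_finset]
  congr
  ext a
  simp

lemma ncard_pairwise_ne_triples {α : Type*} {A : Set α} (hA : A.Finite) :
    {t ∈ A ×ˢ A ×ˢ A | t.1 ≠ t.2.1 ∧ t.1 ≠ t.2.2 ∧ t.2.1 ≠ t.2.2}.ncard =
      A.ncard.descFactorial 3 := by
  have := hA.fintype
  let e : {t ∈ A ×ˢ A ×ˢ A | t.1 ≠ t.2.1 ∧ t.1 ≠ t.2.2 ∧ t.2.1 ≠ t.2.2} ≃ (Fin 3 ↪ A) :=
    { toFun t := ⟨![⟨t.1.1, t.2.1.1⟩, ⟨t.1.2.1, t.2.1.2.1⟩, ⟨t.1.2.2, t.2.1.2.2⟩], by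
        obtain ⟨-, hab, hac, hbc⟩ := t.2
        intro i j h
        fin_cases i <;> fin_cases j <;> simp_all [eq_comm]⟩
      invFun f := ⟨(f 0, f 1, f 2), ⟨(f 0).2, (f 1).2, (f 2).2⟩, by
        simp only [ne_eq, ← Subtype.ext_iff, f.injective.eq_iff]
        decide⟩
      left_inv t := rfl
      right_inv f := by ext i; fin_cases i <;> rfl }
  rw [← Nat.card_coe_set_eq, Nat.card_congr e, Nat.card_eq_fintype_card,
    Fintype.card_embedding_eq, Fintype.card_fin, ← Nat.card_eq_fintype_card, Nat.card_coe_set_eq]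

section Flat

variable {n k : ℕ} {H S : Set (Fin n → ZMod 2)} {a b c : Fin n → ZMod 2}

namespace IsFlat

lemma ncard_eq (hH : IsFlat n k H) : H.ncard = 2 ^ k := by
  obtain ⟨x, W, rfl, rfl⟩ := hH
  exact ncard_image_add_submodule x W

lemma add_add_mem (hH : IsFlat n k H) (ha : a ∈ H) (hb : b ∈ H) (hc : c ∈ H) :
    a + b + c ∈ H := by
  obtain ⟨x, W, -, rfl⟩ := hH
  obtain ⟨u, hu, rfl⟩ := ha
  obtain ⟨v, hv, rfl⟩ := hb
  obtain ⟨w, hw, rfl⟩ := hc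
  refine ⟨u + v + w, W.add_mem (W.add_mem hu hv) hw, ?_⟩
  rw [show x + u + (x + v) + (x + w) = x + (u + v + w) + (x + x) by abel,
    ZModModule.add_self, add_zero]

lemma insert_add_add_eq (hH : IsFlat n 2 H) (ha : a ∈ H) (hb : b ∈ H) (hc : c ∈ H)
    (hab : a ≠ b) (hac : a ≠ c) (hbc : b ≠ c) : {a, b, c, a + b + c} = H :=
  eq_of_subset_of_ncard_le
    (insert_subset ha <| insert_subset hb <| insert_subset hc <|
      singleton_subset_iff.mpr (hH.add_add_mem ha hb hc))
    (by rw [hH.ncard_eq, ncard_insert_add_add hab hac hbc]; rfl)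

lemma add_add_notMem (hH : IsFlat n 2 H) (h3 : (H ∩ S).ncard = 3) (ha : a ∈ H ∩ S)
    (hb : b ∈ H ∩ S) (hc : c ∈ H ∩ S) (hab : a ≠ b) (hac : a ≠ c) (hbc : b ≠ c) :
    a + b + c ∉ S := by
  have hHS : {a, b, c} = H ∩ S :=
    eq_of_subset_of_ncard_le (insert_subset ha <| insert_subset hb <| singleton_subset_iff.mpr hc)
      (by rw [h3, ncard_eq_three.mpr ⟨a, b, c, hab, hac, hbc, rfl⟩])
  intro hd
  have hmem : a + b + c ∈ ({a, b, c} : Set _) := hHS ▸ ⟨hH.add_add_mem ha.1 hb.1 hc.1, hd⟩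
  rcases hmem with h | h | h
  exacts [hbc (add_add_eq_left_iff.mp h), hac (add_add_eq_middle_iff.mp h),
    hab (add_add_eq_right_iff.mp h)]

end IsFlat

lemma isFlat_insert_add_add (hab : a ≠ b) (hac : a ≠ c) (hbc : b ≠ c) :
    IsFlat n 2 {a, b, c, a + b + c} := by
  have himage : (fun w => a + w) '' (Submodule.span (ZMod 2) {a + b, a + c} : Set _) =
      {a, b, c, a + b + c} := by
    rw [coe_span_pair]
    simp [image_insert_eq, ← add_assoc, ZModModule.add_self, add_right_comm _ _ a]
  have hcard := ncard_image_add_submodule a (Submodule.span (ZMod 2) {a + b, a + c})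
  rw [himage, ncard_insert_add_add hab hac hbc] at hcard
  exact ⟨a, _, Nat.pow_right_injective le_rfl hcard.symm, himage.symm⟩

end Flat

section Counting

variable {n : ℕ} (S : Set (Fin n → ZMod 2))

lemma energy_eq_ncard_triples :
    energy n S = {t ∈ S ×ˢ S ×ˢ S | t.1 + t.2.1 + t.2.2 ∈ S}.ncard := by
  have hinj : Function.Injective
      fun t : (Fin n → ZMod 2) × (Fin n → ZMod 2) × (Fin n → ZMod 2) =>
        (t.1, t.2.1, t.2.2, t.1 + t.2.1 + t.2.2) := fun _ _ h => by
    simp only [Prod.mk.injEq] at h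
    exact Prod.ext h.1 (Prod.ext h.2.1 h.2.2.1)
  rw [energy, ← ncard_image_of_injective _ hinj]
  congr 1
  ext ⟨a, b, c, d⟩
  simp only [mem_ofPred_eq, mem_image, mem_prod, Prod.mk.injEq, add_eq_add_iff_add_add_eq]
  constructor
  · rintro ⟨ha, hb, hc, hd, rfl⟩
    exact ⟨(a, b, c), ⟨⟨ha, hb, hc⟩, hd⟩, rfl, rfl, rfl, rfl⟩
  · rintro ⟨t, ⟨⟨ha, hb, hc⟩, hd⟩, rfl, rfl, rfl, rfl⟩
    exact ⟨ha, hb, hc, hd, rfl⟩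

lemma IsFlat.triples_fiber_eq {H : Set (Fin n → ZMod 2)} (hH : IsFlat n 2 H) (h3 : (H ∩ S).ncard = 3) :
    {t ∈ {t ∈ S ×ˢ S ×ˢ S | t.1 + t.2.1 + t.2.2 ∉ S} |
      ({t.1, t.2.1, t.2.2, t.1 + t.2.1 + t.2.2} : Set _) = H} =
    {t ∈ (H ∩ S) ×ˢ (H ∩ S) ×ˢ (H ∩ S) | t.1 ≠ t.2.1 ∧ t.1 ≠ t.2.2 ∧ t.2.1 ≠ t.2.2} := by
  ext ⟨a, b, c⟩
  constructor
  · rintro ⟨⟨⟨ha, hb, hc⟩, hd⟩, rfl⟩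
    exact ⟨⟨⟨by simp, ha⟩, ⟨by simp, hb⟩, ⟨by simp, hc⟩⟩,
      pairwise_ne_of_add_add_notMem ha hb hc hd⟩
  · rintro ⟨⟨ha, hb, hc⟩, hab, hac, hbc⟩
    exact ⟨⟨⟨ha.2, hb.2, hc.2⟩, hH.add_add_notMem h3 ha hb hc hab hac hbc⟩,
      hH.insert_add_add_eq ha.1 hb.1 hc.1 hab hac hbc⟩

lemma ncard_triples_add_add_notMem :
    {t ∈ S ×ˢ S ×ˢ S | t.1 + t.2.1 + t.2.2 ∉ S}.ncard =
      {H | IsFlat n 2 H ∧ (H ∩ S).ncard = 3}.ncard * 6 := by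
  refine ncard_eq_ncard_mul_of_fibers (toFinite _) (toFinite _)
    (f := fun t => {t.1, t.2.1, t.2.2, t.1 + t.2.1 + t.2.2}) ?_ ?_
  · rintro ⟨a, b, c⟩ ⟨⟨ha, hb, hc⟩, hd⟩
    obtain ⟨hab, hac, hbc⟩ := pairwise_ne_of_add_add_notMem ha hb hc hd
    refine ⟨isFlat_insert_add_add hab hac hbc, ?_⟩
    rw [insert_inter_of_mem ha, insert_inter_of_mem hb, insert_inter_of_mem hc,
      singleton_inter_eq_empty.mpr hd, insert_empty_eq]
    exact ncard_eq_three.mpr ⟨a, b, c, hab, hac, hbc, rfl⟩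
  · rintro H ⟨hH, h3⟩
    rw [hH.triples_fiber_eq S h3, ncard_pairwise_ne_triples (toFinite _), h3]
    rfl

end Counting

theorem stmt_13 (n m : ℕ) (S : Set (Fin n → ZMod 2)) (hm : S.ncard = m) :
    (({H : Set (Fin n → ZMod 2) | IsFlat n 2 H ∧ (H ∩ S).ncard = 3}.ncard : ℤ)) * 6 =
      (m : ℤ) ^ 3 - (energy n S : ℤ) := by
  subst hm
  have hsplit : {t ∈ S ×ˢ S ×ˢ S | t.1 + t.2.1 + t.2.2 ∈ S}.ncard +
      {t ∈ S ×ˢ S ×ˢ S | t.1 + t.2.1 + t.2.2 ∉ S}.ncard = S.ncard ^ 3 := by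
    rw [pow_three, ← ncard_prod, ← ncard_prod]
    exact ncard_inter_add_ncard_sdiff_eq_ncard _ _
  rw [energy_eq_ncard_triples, ← Nat.cast_pow, ← hsplit, ncard_triples_add_add_notMem]
  push_cast
  ring
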